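/- Let H_f be a projector on ℂ^N and ψ₀ a unit vector. Then the operator norm of the nested commutator [|ψ₀⟩⟨ψ₀|, [|ψ₀⟩⟨ψ₀|, H_f]] is at most √(2V₀), where V₀ = ⟨ψ₀|H_f²|ψ₀⟩ − ⟨ψ₀|H_f|ψ₀⟩². -/

import Mathlib

/-!
Write `p = |ψ⟩⟨ψ|` and `w = Hψ - ⟪ψ, Hψ⟫ ψ`, which is orthogonal to `ψ` and has `‖w‖² = V₀`.
For self-adjoint `H` the nested commutator is `[p, [p, H]] = |w⟩⟨ψ| + |ψ⟩⟨w|`. This operator `T`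
is self-adjoint with `T² = |w⟩⟨w| + ‖w‖² |ψ⟩⟨ψ|`, so the C⋆-identity gives `‖T‖² = ‖T²‖ ≤ 2‖w‖²`.
-/

open scoped InnerProductSpace
open ContinuousLinearMap InnerProductSpace

variable {𝕜 E : Type*} [RCLike 𝕜] [NormedAddCommGroup E] [InnerProductSpace 𝕜 E]

def deviation (h : E →L[𝕜] E) (ψ : E) : E := h ψ - ⟪ψ, h ψ⟫_𝕜 • ψ

lemma inner_deviation_eq_zero {ψ : E} (hψ : ‖ψ‖ = 1) (h : E →L[𝕜] E) :
    ⟪ψ, deviation h ψ⟫_𝕜 = 0 := by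
  simp [deviation, inner_sub_right, inner_smul_right, inner_self_eq_norm_sq_to_K, hψ]

variable [CompleteSpace E] {h : E →L[𝕜] E}

lemma IsSelfAdjoint.conj_inner_apply_self (hh : IsSelfAdjoint h) (ψ : E) :
    (starRingEnd 𝕜) ⟪ψ, h ψ⟫_𝕜 = ⟪ψ, h ψ⟫_𝕜 :=
  (inner_conj_symm _ _).trans (hh.isSymmetric ψ ψ)

lemma norm_deviation_sq (hh : IsSelfAdjoint h) {ψ : E} (hψ : ‖ψ‖ = 1) :
    (‖deviation h ψ‖ : 𝕜) ^ 2 = ⟪ψ, (h * h) ψ⟫_𝕜 - ⟪ψ, h ψ⟫_𝕜 ^ 2 := by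
  have hsymm : ⟪h ψ, h ψ⟫_𝕜 = ⟪ψ, (h * h) ψ⟫_𝕜 := hh.isSymmetric ψ (h ψ)
  have hsymm' : ⟪h ψ, ψ⟫_𝕜 = ⟪ψ, h ψ⟫_𝕜 := hh.isSymmetric ψ ψ
  have hψψ : ⟪ψ, ψ⟫_𝕜 = 1 := by simp [inner_self_eq_norm_sq_to_K, hψ]
  rw [← inner_self_eq_norm_sq_to_K]
  simp only [deviation, inner_sub_left, inner_sub_right, inner_smul_left, inner_smul_right,
    hh.conj_inner_apply_self, hψψ, hsymm, hsymm']
  ring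

lemma commutator_commutator_rankOne_self (hh : IsSelfAdjoint h) {ψ : E} (hψ : ‖ψ‖ = 1) :
    let p := rankOne 𝕜 ψ ψ
    p * (p * h - h * p) - (p * h - h * p) * p =
      rankOne 𝕜 (deviation h ψ) ψ + rankOne 𝕜 ψ (deviation h ψ) := by
  have hsymm' : ⟪h ψ, ψ⟫_𝕜 = ⟪ψ, h ψ⟫_𝕜 := hh.isSymmetric ψ ψ
  simp only [mul_def, comp_sub, rankOne_comp, comp_rankOne, hh.adjoint_eq, deviation,
    map_sub, map_smul, map_smulₛₗ, sub_apply, smul_apply, rankOne_apply,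
    inner_self_eq_norm_sq_to_K, hψ, hsymm', hh.conj_inner_apply_self]
  module

lemma norm_rankOne_add_rankOne_sq_le {ψ w : E} (hψ : ‖ψ‖ = 1) (hψw : ⟪ψ, w⟫_𝕜 = 0) :
    ‖rankOne 𝕜 w ψ + rankOne 𝕜 ψ w‖ ^ 2 ≤ 2 * ‖w‖ ^ 2 := by
  set T := rankOne 𝕜 w ψ + rankOne 𝕜 ψ w
  have hT : IsSelfAdjoint T := by
    rw [isSelfAdjoint_iff', map_add, adjoint_rankOne, adjoint_rankOne, add_comm]
  have hwψ : ⟪w, ψ⟫_𝕜 = 0 := inner_eq_zero_symm.mp hψw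
  have hTT : T * T = rankOne 𝕜 w w + (‖w‖ : 𝕜) ^ 2 • rankOne 𝕜 ψ ψ := by
    simp only [T, mul_def, add_comp, comp_add, rankOne_comp_rankOne, inner_self_eq_norm_sq_to_K,
      hψ, hψw, hwψ]
    module
  calc ‖T‖ ^ 2 = ‖T * T‖ := hT.norm_mul_self.symm
    _ ≤ ‖w‖ ^ 2 + ‖w‖ ^ 2 := by
      rw [hTT]
      refine (norm_add_le _ _).trans_eq ?_
      simp only [norm_smul, norm_pow, norm_rankOne, hψ, RCLike.norm_ofReal, abs_norm]
      ring
    _ = 2 * ‖w‖ ^ 2 := by ring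

lemma Matrix.toEuclideanCLM_vecMulVec_star {n : Type*} [Fintype n] [DecidableEq n]
    (x y : EuclideanSpace 𝕜 n) :
    Matrix.toEuclideanCLM (𝕜 := 𝕜) (Matrix.vecMulVec x (star y)) = rankOne 𝕜 x y := by
  apply ContinuousLinearMap.coe_injective
  rw [Matrix.coe_toEuclideanCLM_eq_toEuclideanLin, ← symm_toEuclideanLin_rankOne,
    LinearEquiv.apply_symm_apply]

theorem nested_commutator_norm_bound_general (N : ℕ) (Hf : Matrix (Fin N) (Fin N) ℂ)
    (hherm : Hf.IsHermitian)
    (ψ0 : EuclideanSpace ℂ (Fin N)) (hψ0 : ‖ψ0‖ = 1)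
    (V0 : ℝ)
    (hV0 : (V0 : ℂ) = ⟪ψ0, Matrix.toEuclideanLin (Hf * Hf) ψ0⟫_ℂ -
      ⟪ψ0, Matrix.toEuclideanLin Hf ψ0⟫_ℂ ^ 2)
    (P : Matrix (Fin N) (Fin N) ℂ) (hP : P = Matrix.vecMulVec ψ0 (star ψ0)) :
    ‖Matrix.toEuclideanCLM (𝕜 := ℂ) (P * (P * Hf - Hf * P) - (P * Hf - Hf * P) * P)‖ ≤
      Real.sqrt (2 * V0) := by
  set h := Matrix.toEuclideanCLM (𝕜 := ℂ) Hf
  have hh : IsSelfAdjoint h := hherm.isSelfAdjoint.map _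
  have hV : V0 = ‖deviation h ψ0‖ ^ 2 := by
    have hnorm := norm_deviation_sq hh hψ0
    rw [← map_mul] at hnorm
    exact RCLike.ofReal_inj.mp (by push_cast; exact hV0.trans hnorm.symm)
  simp only [map_sub, map_mul, hP, Matrix.toEuclideanCLM_vecMulVec_star]
  rw [commutator_commutator_rankOne_self hh hψ0, hV]
  exact Real.le_sqrt_of_sq_le (norm_rankOne_add_rankOne_sq_le hψ0 (inner_deviation_eq_zero hψ0 h))

theorem nested_commutator_norm_bound (N : ℕ) (Hf : Matrix (Fin N) (Fin N) ℂ)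
    (hherm : Hf.IsHermitian) (hproj : Hf * Hf = Hf)
    (ψ0 : EuclideanSpace ℂ (Fin N)) (hψ0 : ‖ψ0‖ = 1)
    (V0 : ℝ)
    (hV0 : (V0 : ℂ) = ⟪ψ0, Matrix.toEuclideanLin (Hf * Hf) ψ0⟫_ℂ -
      ⟪ψ0, Matrix.toEuclideanLin Hf ψ0⟫_ℂ ^ 2)
    (P : Matrix (Fin N) (Fin N) ℂ) (hP : P = Matrix.vecMulVec ψ0 (star ψ0)) :
    ‖Matrix.toEuclideanCLM (𝕜 := ℂ) (P * (P * Hf - Hf * P) - (P * Hf - Hf * P) * P)‖ ≤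
      Real.sqrt (2 * V0) :=
  nested_commutator_norm_bound_general N Hf hherm ψ0 hψ0 V0 hV0 P hP
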